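/- arXiv:2404.13585 — 2 statements merged into one kernel-verified Lean document; each statement's English description precedes it below -/
import Mathlib

section
/- Let $H_1$ be an $n\times n$ complex Hermitian negative semi-definite matrix with spectral decomposition $H_1 = Q\Lambda Q^\dagger$, $Q$ unitary, $\Lambda = \mathrm{diag}(\lambda_1,\dots,\lambda_n)$ with all $\lambda_i \le 0$. For $u_0\in\mathbb{C}^n$, $u_0\neq 0$, define the explicit warped solution $v(t,p) := Q\,\mathrm{diag}\big(e^{-|p-\lambda_1 t|},\dots,e^{-|p-\lambda_n t|}\big)\,Q^\dagger u_0$ and let $u(t) := \exp(tH_1)u_0$. Then for every $t\ge 0$, $$\frac{\int_0^{\infty}\|v(t,p)\|^2\,dp}{\int_{-\infty}^{\infty}\|v(t,p)\|^2\,dp} = \frac{1}{2}\Big(\frac{\|u(t)\|}{\|u_0\|}\Big)^2.$$ -/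
open Matrix MeasureTheory

/-- The Euclidean norm on `Fin n → ℂ`. -/
noncomputable def euclNorm {n : ℕ} (x : Fin n → ℂ) : ℝ :=
  Real.sqrt (∑ i, ‖x i‖ ^ 2)

/-!
In the eigenbasis of `H₁`, with `w = Q† u₀`, the profile is
`‖v(t,p)‖² = ∑ᵢ |wᵢ|² e^{-2|p - λᵢt|}`, a superposition of Laplace densities centred at `λᵢt`.
Each has total mass `1`, so the denominator is `∑ᵢ |wᵢ|² = ‖u₀‖²`. Since `λᵢt ≤ 0`, the mass of the
`i`-th density on `p > 0` is `e^{2λᵢt}/2 = |e^{λᵢt}|²/2`, and `∑ᵢ |e^{λᵢt} wᵢ|² = ‖u(t)‖²`.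
-/

lemma euclNorm_eq_norm_toLp {n : ℕ} (x : Fin n → ℂ) :
    euclNorm x = ‖(WithLp.toLp 2 x : EuclideanSpace ℂ (Fin n))‖ := by
  rw [EuclideanSpace.norm_eq]
  rfl

lemma euclNorm_sq {n : ℕ} (x : Fin n → ℂ) : euclNorm x ^ 2 = ∑ i, ‖x i‖ ^ 2 :=
  Real.sq_sqrt (Finset.sum_nonneg fun _ _ => sq_nonneg _)

section Unitary

variable {n : ℕ} {Q : Matrix (Fin n) (Fin n) ℂ}

lemma euclNorm_unitary_mulVec (hQ : Q ∈ unitaryGroup (Fin n) ℂ) (x : Fin n → ℂ) :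
    euclNorm (Q *ᵥ x) = euclNorm x := by
  rw [euclNorm_eq_norm_toLp, euclNorm_eq_norm_toLp, ← toEuclideanCLM_toLp]
  exact ContinuousLinearMap.norm_map_of_mem_unitary (Unitary.map_mem toEuclideanCLM hQ) _

lemma euclNorm_conjTranspose_mulVec (hQ : Q ∈ unitaryGroup (Fin n) ℂ) (x : Fin n → ℂ) :
    euclNorm (Qᴴ *ᵥ x) = euclNorm x :=
  euclNorm_unitary_mulVec (Unitary.star_mem hQ) x

lemma euclNorm_sq_unitary_conj_diagonal_mulVec (hQ : Q ∈ unitaryGroup (Fin n) ℂ)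
    (d : Fin n → ℝ) (x : Fin n → ℂ) :
    euclNorm ((Q * diagonal (fun i => (d i : ℂ)) * Qᴴ) *ᵥ x) ^ 2
      = ∑ i, d i ^ 2 * ‖(Qᴴ *ᵥ x) i‖ ^ 2 := by
  rw [← mulVec_mulVec, ← mulVec_mulVec, euclNorm_unitary_mulVec hQ, euclNorm_sq]
  simp [mulVec_diagonal, mul_pow]

lemma exp_unitary_conj_diagonal (hQ : Q ∈ unitaryGroup (Fin n) ℂ) (d : Fin n → ℂ) :
    NormedSpace.exp (Q * diagonal d * Qᴴ)
      = Q * diagonal (fun i => Complex.exp (d i)) * Qᴴ := by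
  have hinv : Q⁻¹ = Qᴴ := inv_eq_right_inv (Unitary.mul_star_self_of_mem hQ)
  rw [← hinv, exp_conj _ _ (Unitary.isUnit_coe (U := ⟨Q, hQ⟩)), exp_diagonal]
  congr
  funext i
  simp [Complex.exp_eq_exp_ℂ]

lemma exp_smul_unitary_conj_diagonal (hQ : Q ∈ unitaryGroup (Fin n) ℂ) (l : Fin n → ℝ)
    (t : ℝ) :
    NormedSpace.exp (t • (Q * diagonal (fun i => (l i : ℂ)) * Qᴴ))
      = Q * diagonal (fun i => (Real.exp (l i * t) : ℂ)) * Qᴴ := by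
  have hsmul : t • (Q * diagonal (fun i => (l i : ℂ)) * Qᴴ)
      = Q * diagonal (fun i => ((l i * t : ℝ) : ℂ)) * Qᴴ := by
    rw [← smul_mul_assoc, ← mul_smul_comm, ← diagonal_smul]
    congr 3
    funext i
    simp [mul_comm]
  rw [hsmul, exp_unitary_conj_diagonal hQ]
  simp only [Complex.ofReal_exp]

end Unitary

section LaplaceProfile

variable {b : ℝ}

lemma integral_exp_neg_mul_abs_sub (hb : 0 < b) (a : ℝ) :
    ∫ p, Real.exp (-(b * |p - a|)) = 2 / b := by
  rw [integral_sub_right_eq_self (fun p => Real.exp (-(b * |p|))) a,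
    integral_comp_abs (f := fun p => Real.exp (-(b * p)))]
  simp_rw [← neg_mul]
  rw [integral_exp_mul_Ioi (neg_lt_zero.mpr hb)]
  field_simp
  simp

lemma integrable_exp_neg_mul_abs_sub (hb : 0 < b) (a : ℝ) :
    Integrable fun p => Real.exp (-(b * |p - a|)) :=
  .of_integral_ne_zero (by rw [integral_exp_neg_mul_abs_sub hb]; positivity)

lemma setIntegral_Ioi_exp_neg_mul_abs_sub (hb : 0 < b) {a : ℝ} (ha : a ≤ 0) :
    ∫ p in Set.Ioi 0, Real.exp (-(b * |p - a|)) = Real.exp (b * a) / b := by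
  have hIoi : ∀ p ∈ Set.Ioi (0 : ℝ),
      Real.exp (-(b * |p - a|)) = Real.exp (b * a) * Real.exp (-b * p) := by
    intro p hp
    rw [abs_of_nonneg (by linarith [Set.mem_Ioi.mp hp]), ← Real.exp_add]
    ring_nf
  rw [setIntegral_congr_fun measurableSet_Ioi hIoi, integral_const_mul,
    integral_exp_mul_Ioi (neg_lt_zero.mpr hb)]
  field_simp
  simp

variable {ι : Type*} (s : Finset ι) (c a : ι → ℝ)

lemma integral_sum_mul_exp_neg_mul_abs_sub (hb : 0 < b) :
    ∫ p, ∑ i ∈ s, c i * Real.exp (-(b * |p - a i|)) = 2 / b * ∑ i ∈ s, c i := by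
  rw [integral_finsetSum _ fun i _ => (integrable_exp_neg_mul_abs_sub hb (a i)).const_mul _,
    Finset.mul_sum]
  refine Finset.sum_congr rfl fun i _ => ?_
  rw [integral_const_mul, integral_exp_neg_mul_abs_sub hb, mul_comm]

lemma setIntegral_Ioi_sum_mul_exp_neg_mul_abs_sub (hb : 0 < b) (ha : ∀ i ∈ s, a i ≤ 0) :
    ∫ p in Set.Ioi 0, ∑ i ∈ s, c i * Real.exp (-(b * |p - a i|))
      = 1 / b * ∑ i ∈ s, c i * Real.exp (b * a i) := by
  rw [integral_finsetSum _ fun i _ =>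
      ((integrable_exp_neg_mul_abs_sub hb (a i)).const_mul _).integrableOn, Finset.mul_sum]
  refine Finset.sum_congr rfl fun i hi => ?_
  rw [integral_const_mul, setIntegral_Ioi_exp_neg_mul_abs_sub hb (ha i hi)]
  ring

end LaplaceProfile

theorem stmt4_general {n : ℕ} (H1 Q : Matrix (Fin n) (Fin n) ℂ) (l : Fin n → ℝ)
    (hQ : Q ∈ Matrix.unitaryGroup (Fin n) ℂ)
    (hspec : H1 = Q * Matrix.diagonal (fun i => (l i : ℂ)) * Qᴴ)
    (hneg : ∀ i, l i ≤ 0)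
    (u0 : Fin n → ℂ)
    (v : ℝ → ℝ → Fin n → ℂ)
    (hv : ∀ t p : ℝ, v t p =
      (Q * Matrix.diagonal (fun i => (Real.exp (-|p - l i * t|) : ℂ)) * Qᴴ).mulVec u0)
    (u : ℝ → Fin n → ℂ)
    (hu : ∀ t : ℝ, u t = (NormedSpace.exp (t • H1)).mulVec u0) :
    ∀ t : ℝ, 0 ≤ t →
      (∫ p in Set.Ioi (0 : ℝ), (euclNorm (v t p)) ^ 2) / (∫ p : ℝ, (euclNorm (v t p)) ^ 2)
        = (1 / 2) * (euclNorm (u t) / euclNorm u0) ^ 2 := by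
  intro t ht
  set w := Qᴴ *ᵥ u0 with hw
  have hv_sq : ∀ p, euclNorm (v t p) ^ 2
      = ∑ i, ‖w i‖ ^ 2 * Real.exp (-(2 * |p - l i * t|)) := by
    intro p
    rw [hv, euclNorm_sq_unitary_conj_diagonal_mulVec hQ, ← hw]
    refine Finset.sum_congr rfl fun i _ => ?_
    rw [← Real.exp_nat_mul]
    push_cast
    ring_nf
  have hu_sq : euclNorm (u t) ^ 2 = ∑ i, ‖w i‖ ^ 2 * Real.exp (2 * (l i * t)) := by
    rw [hu, hspec, exp_smul_unitary_conj_diagonal hQ,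
      euclNorm_sq_unitary_conj_diagonal_mulVec hQ, ← hw]
    refine Finset.sum_congr rfl fun i _ => ?_
    rw [← Real.exp_nat_mul]
    push_cast
    ring_nf
  have hu0_sq : euclNorm u0 ^ 2 = ∑ i, ‖w i‖ ^ 2 := by
    rw [← euclNorm_conjTranspose_mulVec hQ, euclNorm_sq]
  simp_rw [hv_sq]
  rw [setIntegral_Ioi_sum_mul_exp_neg_mul_abs_sub _ _ _ two_pos
      fun i _ => mul_nonpos_of_nonpos_of_nonneg (hneg i) ht,
    integral_sum_mul_exp_neg_mul_abs_sub _ _ _ two_pos, div_pow, hu_sq, hu0_sq]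
  ring

/-- for Hermitian negative semi-definite `H₁ = Q Λ Q†` (all
`λᵢ ≤ 0`) and `u₀ ≠ 0`, the explicit warped solution
`v(t,p) = Q diag(e^{-|p-λᵢt|}) Q† u₀` and `u(t) = exp(tH₁)u₀` satisfy, for
`t ≥ 0`,
`(∫_{p≥0} ‖v(t,p)‖² dp) / (∫_ℝ ‖v(t,p)‖² dp) = (1/2)(‖u(t)‖/‖u₀‖)²`. -/
theorem stmt4 {n : ℕ} (H1 Q : Matrix (Fin n) (Fin n) ℂ) (l : Fin n → ℝ)
    (hH1 : H1.IsHermitian) (hQ : Q ∈ Matrix.unitaryGroup (Fin n) ℂ)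
    (hspec : H1 = Q * Matrix.diagonal (fun i => (l i : ℂ)) * Qᴴ)
    (hneg : ∀ i, l i ≤ 0)
    (u0 : Fin n → ℂ) (hu0 : u0 ≠ 0)
    (v : ℝ → ℝ → Fin n → ℂ)
    (hv : ∀ t p : ℝ, v t p =
      (Q * Matrix.diagonal (fun i => (Real.exp (-|p - l i * t|) : ℂ)) * Qᴴ).mulVec u0)
    (u : ℝ → Fin n → ℂ)
    (hu : ∀ t : ℝ, u t = (NormedSpace.exp (t • H1)).mulVec u0) :
    ∀ t : ℝ, 0 ≤ t →
      (∫ p in Set.Ioi (0 : ℝ), (euclNorm (v t p)) ^ 2) / (∫ p : ℝ, (euclNorm (v t p)) ^ 2)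
        = (1 / 2) * (euclNorm (u t) / euclNorm u0) ^ 2 :=
  stmt4_general H1 Q l hQ hspec hneg u0 v hv u hu
end

section
/- Let $H_1, H_2$ be $n\times n$ complex Hermitian matrices with $H_1$ negative semi-definite, with spectral decomposition $H_1 = Q\Lambda Q^\dagger$, $Q$ unitary, $\Lambda = \mathrm{diag}(\lambda_1,\dots,\lambda_n)$, all $\lambda_i\le 0$. Fix $\Delta t > 0$ and $u_0\in\mathbb{C}^n$. Define the exact splitting iterates $u^0 := u_0$, $u^{m+1} := \exp(i\Delta t\, H_2)\exp(\Delta t\, H_1)\,u^m$, and the Schr\"odingerized splitting iterates $v^0(p) := e^{-|p|}u_0$, $v^{m+1} := \exp(i\Delta t\, H_2)\,\big(T_{\Delta t} v^m\big)$, where $(T_t w)(p) := Q\,\big((Q^\dagger w)_i(p-\lambda_i t)\big)_{i=1}^n$. Then for every $m\ge 0$ and every $p\ge 0$, $v^m(p) = e^{-p}\,u^m$. -/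
open Matrix

namespace Matrix

variable {ι : Type*} [Fintype ι] [DecidableEq ι]

theorem exp_unitary_conj {𝔸 : Type*} [NormedCommRing 𝔸] [StarRing 𝔸] [NormedAlgebra ℚ 𝔸]
    [CompleteSpace 𝔸] {Q : Matrix ι ι 𝔸} (hQ : Q ∈ unitaryGroup ι 𝔸) (A : Matrix ι ι 𝔸) :
    NormedSpace.exp (Q * A * Qᴴ) = Q * NormedSpace.exp A * Qᴴ :=
  exp_units_conj (Unitary.toUnits ⟨Q, hQ⟩) A

theorem exp_smul_unitary_conj_diagonal {Q : Matrix ι ι ℂ} (hQ : Q ∈ unitaryGroup ι ℂ)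
    (l : ι → ℝ) (t : ℝ) :
    NormedSpace.exp (t • (Q * diagonal (fun i => (l i : ℂ)) * Qᴴ)) =
      Q * diagonal (fun i => Complex.exp (t * l i)) * Qᴴ := by
  rw [← Matrix.smul_mul, ← Matrix.mul_smul, ← diagonal_smul, exp_unitary_conj hQ, exp_diagonal]
  congr
  funext i
  rw [Pi.coe_exp, ← Complex.exp_eq_exp_ℂ, Pi.smul_apply, Complex.real_smul]

theorem exp_smul_unitary_conj_diagonal_mulVec {Q : Matrix ι ι ℂ} (hQ : Q ∈ unitaryGroup ι ℂ)
    (l : ι → ℝ) (t : ℝ) (x : ι → ℂ) :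
    NormedSpace.exp (t • (Q * diagonal (fun i => (l i : ℂ)) * Qᴴ)) *ᵥ x =
      Q *ᵥ fun i => Complex.exp (t * l i) * (Qᴴ *ᵥ x) i := by
  rw [exp_smul_unitary_conj_diagonal hQ, ← mulVec_mulVec, ← mulVec_mulVec]
  congr 1
  funext i
  exact mulVec_diagonal _ _ i

end Matrix

def transportPropagator {ι : Type*} [Fintype ι] (Q : Matrix ι ι ℂ) (l : ι → ℝ) (t : ℝ)
    (w : ℝ → ι → ℂ) (p : ℝ) : ι → ℂ :=
  Q *ᵥ fun i => (Qᴴ *ᵥ w (p - l i * t)) i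

/-- Since `λᵢ t ≤ 0`, the transport only reads `w` on `p ≥ 0`, where
`e^{-(p - λᵢ t)} = e^{-p} e^{λᵢ t}`: on the profile `e^{-p}` it acts as `e^{t H₁}`. -/
theorem transportPropagator_exp_neg_smul {ι : Type*} [Fintype ι] [DecidableEq ι]
    {Q : Matrix ι ι ℂ} (hQ : Q ∈ unitaryGroup ι ℂ) {l : ι → ℝ} (hl : ∀ i, l i ≤ 0) {t : ℝ}
    (ht : 0 ≤ t) {w : ℝ → ι → ℂ} {x : ι → ℂ} (hw : ∀ p, 0 ≤ p → w p = Real.exp (-p) • x)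
    {p : ℝ} (hp : 0 ≤ p) :
    transportPropagator Q l t w p =
      Real.exp (-p) • NormedSpace.exp (t • (Q * diagonal (fun i => (l i : ℂ)) * Qᴴ)) *ᵥ x := by
  rw [exp_smul_unitary_conj_diagonal_mulVec hQ, ← mulVec_smul, transportPropagator]
  congr 1
  funext i
  have hshift : 0 ≤ p - l i * t := by nlinarith [hl i]
  simp only [hw _ hshift, mulVec_smul, Pi.smul_apply, Complex.real_smul]
  rw [Complex.ofReal_exp, Complex.ofReal_exp, ← mul_assoc, ← Complex.exp_add]
  push_cast
  ring_nf

theorem stmt9_general {n : ℕ} (H1 H2 Q : Matrix (Fin n) (Fin n) ℂ) (l : Fin n → ℝ)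
    (hQ : Q ∈ Matrix.unitaryGroup (Fin n) ℂ)
    (hspec : H1 = Q * Matrix.diagonal (fun i => (l i : ℂ)) * Qᴴ)
    (hneg : ∀ i, l i ≤ 0)
    (Δt : ℝ) (hΔt : 0 < Δt) (u0 : Fin n → ℂ)
    (T : ℝ → (ℝ → Fin n → ℂ) → (ℝ → Fin n → ℂ))
    (hT : ∀ (t : ℝ) (w : ℝ → Fin n → ℂ) (p : ℝ),
      T t w p = Q.mulVec (fun i => Qᴴ.mulVec (w (p - l i * t)) i))
    (u : ℕ → Fin n → ℂ)
    (hu0 : u 0 = u0)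
    (hu : ∀ m : ℕ, u (m + 1) =
      (NormedSpace.exp ((Complex.I * (Δt : ℂ)) • H2)).mulVec
        ((NormedSpace.exp (Δt • H1)).mulVec (u m)))
    (v : ℕ → ℝ → Fin n → ℂ)
    (hv0 : ∀ p : ℝ, v 0 p = Real.exp (-|p|) • u0)
    (hv : ∀ (m : ℕ) (p : ℝ), v (m + 1) p =
      (NormedSpace.exp ((Complex.I * (Δt : ℂ)) • H2)).mulVec (T Δt (v m) p)) :
    ∀ m : ℕ, ∀ p : ℝ, 0 ≤ p → v m p = Real.exp (-p) • u m := by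
  intro m
  induction m with
  | zero =>
    intro p hp
    rw [hv0, hu0, abs_of_nonneg hp]
  | succ m ih =>
    intro p hp
    have htransport : T Δt (v m) p = transportPropagator Q l Δt (v m) p := hT _ _ _
    rw [hv, hu, htransport, transportPropagator_exp_neg_smul hQ hneg hΔt.le ih hp, hspec,
      mulVec_smul]

/-- with `H₁, H₂` Hermitian, `H₁ = Q Λ Q†` negative semi-definite
(all `λᵢ ≤ 0`), the exact splitting iterates
`u⁰ = u₀`, `u^{m+1} = exp(iΔt H₂) exp(Δt H₁) uᵐ` and the Schrödingerized
splitting iterates `v⁰(p) = e^{-|p|}u₀`,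
`v^{m+1} = exp(iΔt H₂) (T_{Δt} vᵐ)` (with the transport propagator
`(T_t w)(p) = Q ((Q† w)ᵢ(p - λᵢ t))ᵢ`) satisfy `vᵐ(p) = e^{-p} uᵐ` for every
`m ≥ 0` and `p ≥ 0`. -/
theorem stmt9 {n : ℕ} (H1 H2 Q : Matrix (Fin n) (Fin n) ℂ) (l : Fin n → ℝ)
    (hH1 : H1.IsHermitian) (hH2 : H2.IsHermitian)
    (hQ : Q ∈ Matrix.unitaryGroup (Fin n) ℂ)
    (hspec : H1 = Q * Matrix.diagonal (fun i => (l i : ℂ)) * Qᴴ)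
    (hneg : ∀ i, l i ≤ 0)
    (Δt : ℝ) (hΔt : 0 < Δt) (u0 : Fin n → ℂ)
    (T : ℝ → (ℝ → Fin n → ℂ) → (ℝ → Fin n → ℂ))
    (hT : ∀ (t : ℝ) (w : ℝ → Fin n → ℂ) (p : ℝ),
      T t w p = Q.mulVec (fun i => Qᴴ.mulVec (w (p - l i * t)) i))
    (u : ℕ → Fin n → ℂ)
    (hu0 : u 0 = u0)
    (hu : ∀ m : ℕ, u (m + 1) =
      (NormedSpace.exp ((Complex.I * (Δt : ℂ)) • H2)).mulVec
        ((NormedSpace.exp (Δt • H1)).mulVec (u m)))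
    (v : ℕ → ℝ → Fin n → ℂ)
    (hv0 : ∀ p : ℝ, v 0 p = Real.exp (-|p|) • u0)
    (hv : ∀ (m : ℕ) (p : ℝ), v (m + 1) p =
      (NormedSpace.exp ((Complex.I * (Δt : ℂ)) • H2)).mulVec (T Δt (v m) p)) :
    ∀ m : ℕ, ∀ p : ℝ, 0 ≤ p → v m p = Real.exp (-p) • u m :=
  stmt9_general H1 H2 Q l hQ hspec hneg Δt hΔt u0 T hT u hu0 hu v hv0 hv
end
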